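/- Let X be a scheme over a field of characteristic p > 0 with absolute Frobenius F : X → X. If the pushforward F_* O_X is locally free as an O_X-module, then X is reduced. -/

import Mathlib

open CategoryTheory AlgebraicGeometry TopologicalSpace

universe u

/-- `φ` is the (absolute) Frobenius endomorphism of the structure sheaf of rings of `X`:
on every open set it is given by `x ↦ x ^ p`. -/
def IsFrobenius (X : Scheme.{u}) (p : ℕ) (φ : X.ringCatSheaf ⟶ X.ringCatSheaf) : Prop :=
  ∀ (U : (Opens X)ᵒᵖ) (x : X.ringCatSheaf.val.obj U), φ.hom.app U x = x ^ p

/-- Pushforward along the absolute Frobenius morphism of `X`: since the Frobenius is the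
identity on the underlying topological space, it is the restriction of scalars along the
Frobenius endomorphism of the structure sheaf. -/
noncomputable def frobPush (X : Scheme.{u}) (φ : X.ringCatSheaf ⟶ X.ringCatSheaf) :
    X.Modules ⥤ X.Modules :=
  SheafOfModules.restrictScalars φ

/-- The structure sheaf `O_X` as a module over itself. -/
noncomputable def structureModule (X : Scheme.{u}) : X.Modules := SheafOfModules.unit _

/-- The restriction of a sheaf of modules on `X` to an open subset `U`, as a presheaf of
modules over the restriction of the structure sheaf. -/
noncomputable def restrictOpen (X : Scheme.{u}) (U : X.Opens) (M : X.Modules) :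
    PresheafOfModules.{u}
      ((U.isOpenEmbedding'.isOpenMap.functor (f := U.inclusion')).op ⋙ X.ringCatSheaf.val) :=
  (PresheafOfModules.pushforward₀ _ _).obj M.val

/-- A sheaf of modules on `X` is locally free if every point has an open neighbourhood over
which it is isomorphic to a free module. -/
def IsLocallyFree (X : Scheme.{u}) (M : X.Modules) : Prop :=
  ∀ x : X, ∃ (U : X.Opens) (_ : x ∈ U) (ι : Type u),
    Nonempty (restrictOpen X U M ≅ restrictOpen X U (SheafOfModules.free ι))

/-!
A section `x` of `𝒪_X` acts on `F_* 𝒪_X` through the Frobenius, i.e. as multiplication by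
`x ^ p`. So if `x ^ p = 0`, then `x` kills `F_* 𝒪_X`, hence also the free module `𝒪_X^{(ι)}`
isomorphic to it near any given point. A free module of sections is either zero, and then so is
`F_* 𝒪_X`, whose sections are those of `𝒪_X`, or has `𝒪_X` as a direct summand, on which `x`
acts faithfully. Either way `x` vanishes near every point, so `x = 0`; as `p > 1`, this makes every
ring of sections reduced.
-/

universe v u₁ v₁

open Limits Opposite

namespace SheafOfModules

variable {C : Type u₁} [Category.{v₁} C] {J : GrothendieckTopology C} {R : Sheaf J RingCat.{u}}

lemma subsingleton_val_obj_of_isZero {M : SheafOfModules.{v} R} (hM : IsZero M) (U : Cᵒᵖ) :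
    Subsingleton (M.val.obj U) :=
  ModuleCat.isZero_iff_subsingleton.mp
    ((forget R ⋙ PresheafOfModules.evaluation _ U).map_isZero hM)

lemma faithfulSMul_val_obj_of_retract {M : SheafOfModules.{u} R} (h : Retract (unit R) M)
    (U : Cᵒᵖ) : FaithfulSMul (R.obj.obj U) (M.val.obj U) := by
  refine ⟨fun {r s} hrs => ?_⟩
  have hi (t : R.obj.obj U) : h.i.val.app U t = t • h.i.val.app U (1 : R.obj.obj U) := by
    conv_lhs => rw [← mul_one t]
    exact (h.i.val.app U).hom.map_smul t (1 : R.obj.obj U)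
  have hr (t : R.obj.obj U) : h.r.val.app U (h.i.val.app U t) = t :=
    congr($(h.retract).val.app U t)
  rw [← hr r, ← hr s, hi r, hi s, hrs]

variable [HasWeakSheafify J AddCommGrpCat.{u}] [J.WEqualsLocallyBijective AddCommGrpCat.{u}]

lemma isZero_free_of_isEmpty (ι : Type u) [IsEmpty ι] : IsZero (free (R := R) ι) :=
  (IsZero.iff_id_eq_zero _).mpr (Sigma.hom_ext _ _ isEmptyElim)

noncomputable def retractFree {ι : Type u} (i : ι) : Retract (unit R) (free ι) where
  i := ιFree i
  r := Cofan.IsColimit.desc (isColimitFreeCofan ι) fun _ => 𝟙 _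
  retract := Cofan.IsColimit.fac _ _ _

end SheafOfModules

namespace IsFrobenius

variable {X : Scheme.{u}} {p : ℕ} {φ : X.ringCatSheaf ⟶ X.ringCatSheaf}

lemma smul_eq_zero_of_pow_eq_zero (hφ : IsFrobenius X p φ) {U : (Opens X)ᵒᵖ}
    {r : X.ringCatSheaf.obj.obj U} (hr : r ^ p = 0)
    (a : ((frobPush X φ).obj (structureModule X)).val.obj U) : r • a = 0 := by
  change φ.hom.app U r * (show X.ringCatSheaf.obj.obj U from a) = 0
  rw [hφ, hr, zero_mul]

lemma eq_zero_of_pow_eq_zero_of_iso_free (hφ : IsFrobenius X p φ) {V : X.Opens} {ι : Type u}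
    (e : restrictOpen X V ((frobPush X φ).obj (structureModule X)) ≅
      restrictOpen X V (SheafOfModules.free ι)) (W : Opens V)
    {x : X.ringCatSheaf.obj.obj
      (op ((V.isOpenEmbedding'.isOpenMap.functor (f := V.inclusion')).obj W))}
    (hx : x ^ p = 0) : x = 0 := by
  let F := V.isOpenEmbedding'.isOpenMap.functor (f := V.inclusion')
  let eIso := (PresheafOfModules.evaluation _ (op W)).mapIso e
  let eW := eIso.toLinearEquiv
  rcases isEmpty_or_nonempty ι with hι | ⟨⟨i⟩⟩
  · have hsub := SheafOfModules.subsingleton_val_obj_of_isZero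
      (SheafOfModules.isZero_free_of_isEmpty (R := X.ringCatSheaf) ι) (op (F.obj W))
    exact eW.injective (@Subsingleton.elim _ hsub _ _)
  · have hfaithful := SheafOfModules.faithfulSMul_val_obj_of_retract
      (SheafOfModules.retractFree (R := X.ringCatSheaf) i) (op (F.obj W))
    refine hfaithful.eq_of_smul_eq_smul fun b => ?_
    have hkill : x • eW (eW.symm b) = 0 := (map_smul eW x _).symm.trans
      ((congrArg eW (hφ.smul_eq_zero_of_pow_eq_zero hx _)).trans (map_zero eW))
    exact (eW.apply_symm_apply b ▸ hkill).trans (zero_smul _ b).symm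

lemma eq_zero_of_pow_eq_zero (hφ : IsFrobenius X p φ)
    (hfree : IsLocallyFree X ((frobPush X φ).obj (structureModule X))) {U : X.Opens}
    {x : Γ(X, U)} (hx : x ^ p = 0) : x = 0 := by
  refine TopCat.Presheaf.section_ext X.sheaf U x 0 fun u hu => ?_
  obtain ⟨V, hV, ι, ⟨e⟩⟩ := hfree u
  let W : Opens V := (Opens.map V.inclusion').obj U
  have hWU : (V.isOpenEmbedding'.isOpenMap.functor (f := V.inclusion')).obj W ≤ U := by
    rintro y ⟨w, hw, rfl⟩
    exact hw
  have hres : X.presheaf.map (homOfLE hWU).op x = 0 :=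
    hφ.eq_zero_of_pow_eq_zero_of_iso_free e W
      ((map_pow _ x p).symm.trans (by rw [hx]; exact map_zero _))
  change X.presheaf.germ U u hu x = X.presheaf.germ U u hu 0
  rw [map_zero, ← X.presheaf.germ_res_apply (homOfLE hWU) u ⟨⟨u, hV⟩, hu, rfl⟩, hres, map_zero]

end IsFrobenius

theorem reduced_of_frobenius_pushforward_locallyFree_general
    (p : ℕ) (hp : p.Prime)
    (X : Scheme.{u})
    (φ : X.ringCatSheaf ⟶ X.ringCatSheaf) (hφ : IsFrobenius X p φ)
    (hfree : IsLocallyFree X ((frobPush X φ).obj (structureModule X))) :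
    IsReduced X :=
  ⟨fun _ => (isReduced_iff_pow_one_lt p hp.one_lt).mpr fun _ => hφ.eq_zero_of_pow_eq_zero hfree⟩

/-- If `X` is a scheme over a field of characteristic `p > 0` such that the pushforward
`F_* O_X` of the structure sheaf along the absolute Frobenius is locally free as an
`O_X`-module, then `X` is reduced. -/
theorem reduced_of_frobenius_pushforward_locallyFree
    (k : Type u) [Field k] (p : ℕ) (hp : p.Prime) [CharP k p]
    (X : Scheme.{u}) (f : X ⟶ Spec (CommRingCat.of k))
    (φ : X.ringCatSheaf ⟶ X.ringCatSheaf) (hφ : IsFrobenius X p φ)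
    (hfree : IsLocallyFree X ((frobPush X φ).obj (structureModule X))) :
    IsReduced X :=
  reduced_of_frobenius_pushforward_locallyFree_general p hp X φ hφ hfree
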